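/- Backward direction of the single-forbidden-edge lemma: if f_s is a stable flow on D_s (D plus terminal s and edge sv ranked by v just better than the forbidden edge uv) with f_s(sv) = 0, then f_s(uv) = 0, and the restriction of f_s to D (deleting edge sv) is a stable flow on D avoiding uv. -/

import Mathlib

/-- A flow network: directed edges `E` over vertices `V`, capacities, a set `S`
of terminals, and for each vertex a rank of its incident edges
(lower rank = more preferred). -/
structure FlowNet (V E : Type) where
  src : E → V
  dst : E → V
  cap : E → ℚ
  S : Set V
  rk : V → E → ℚ

variable {V E : Type}

/-- Total flow leaving `v`. -/
def outflow [Fintype E] [DecidableEq V] (N : FlowNet V E) (f : E → ℚ) (v : V) : ℚ :=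
  ∑ e : E, if N.src e = v then f e else 0

/-- Total flow entering `v`. -/
def inflow [Fintype E] [DecidableEq V] (N : FlowNet V E) (f : E → ℚ) (v : V) : ℚ :=
  ∑ e : E, if N.dst e = v then f e else 0

/-- Feasible flow: capacity constraints, and conservation at non-terminals. -/
def Feasible [Fintype E] [DecidableEq V] (N : FlowNet V E) (f : E → ℚ) : Prop :=
  (∀ e, 0 ≤ f e ∧ f e ≤ N.cap e) ∧
  (∀ v, v ∉ N.S → outflow N f v = inflow N f v)

/-- A (nonempty) directed walk, given as the list of its edges. -/
def IsWalk (N : FlowNet V E) (l : List E) : Prop :=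
  l ≠ [] ∧ l.Chain' (fun e e' => N.dst e = N.src e')

/-- The first edge `e` of a walk dominates `f` at its start: the start vertex is
a terminal, or some outgoing edge worse than `e` carries positive flow. -/
def DomAtStart (N : FlowNet V E) (f : E → ℚ) (e : E) : Prop :=
  N.src e ∈ N.S ∨
    ∃ e', N.src e' = N.src e ∧ 0 < f e' ∧ N.rk (N.src e) e < N.rk (N.src e) e'

/-- The last edge `e` of a walk dominates `f` at its end: the end vertex is a
terminal, or some incoming edge worse than `e` carries positive flow. -/
def DomAtEnd (N : FlowNet V E) (f : E → ℚ) (e : E) : Prop :=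
  N.dst e ∈ N.S ∨
    ∃ e', N.dst e' = N.dst e ∧ 0 < f e' ∧ N.rk (N.dst e) e < N.rk (N.dst e) e'

/-- A blocking walk: a directed walk of unsaturated edges dominating `f` at both ends. -/
def IsBlockingWalk (N : FlowNet V E) (f : E → ℚ) (l : List E) : Prop :=
  IsWalk N l ∧ (∀ e ∈ l, f e < N.cap e) ∧
  ∃ h : l ≠ [], DomAtStart N f (l.head h) ∧ DomAtEnd N f (l.getLast h)

/-- A stable flow: a feasible flow admitting no blocking walk. -/
def IsStableFlow [Fintype E] [DecidableEq V] (N : FlowNet V E) (f : E → ℚ) : Prop :=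
  Feasible N f ∧ ∀ l : List E, ¬ IsBlockingWalk N f l

/-- `D_s`: add a new terminal `s = inr ()` and an edge `sv = inr ()` of
capacity `γ` from `s` to `v = dst e0`, ranked `ρ` by `v`. -/
def addSrc (N : FlowNet V E) (e0 : E) (γ ρ : ℚ) :
    FlowNet (V ⊕ Unit) (E ⊕ Unit) where
  src x := match x with
    | Sum.inl e => Sum.inl (N.src e)
    | Sum.inr _ => Sum.inr ()
  dst x := match x with
    | Sum.inl e => Sum.inl (N.dst e)
    | Sum.inr _ => Sum.inl (N.dst e0)
  cap x := match x with
    | Sum.inl e => N.cap e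
    | Sum.inr _ => γ
  S := (Sum.inl '' N.S) ∪ {Sum.inr ()}
  rk x y := match x, y with
    | Sum.inl v, Sum.inl e => N.rk v e
    | Sum.inl _, Sum.inr _ => ρ
    | Sum.inr _, _ => 0

/-
If `f_s(sv) = 0 < γ`, the one-edge walk `sv` is unsaturated and starts at the terminal `s`;
since `v` ranks `sv` above `uv`, positive flow on `uv` would make `sv` a blocking walk.
Once `f_s(uv) = f_s(sv) = 0`, the restriction to `D` is feasible, and every blocking walk of
the restriction maps to a blocking walk of `f_s` in `D_s`, because `D_s` ranks the edges of `D`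
as `D` does.
-/

theorem IsStableFlow.eq_zero_of_terminal_unsaturated [Fintype E] [DecidableEq V]
    {N : FlowNet V E} {f : E → ℚ} (hf : IsStableFlow N f) {e e' : E}
    (hsrc : N.src e ∈ N.S) (hunsat : f e < N.cap e) (hdst : N.dst e' = N.dst e)
    (hrk : N.rk (N.dst e) e < N.rk (N.dst e) e') : f e' = 0 := by
  obtain ⟨⟨hcap, -⟩, hstab⟩ := hf
  refine le_antisymm (not_lt.mp fun hpos => hstab [e] ?_) (hcap e').1
  refine ⟨⟨List.cons_ne_nil _ _, List.isChain_singleton _⟩, ?_, List.cons_ne_nil _ _,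
    Or.inl hsrc, Or.inr ⟨e', hdst, hpos, hrk⟩⟩
  simpa using hunsat

section addSrc

variable [Fintype E] [DecidableEq V] {N : FlowNet V E} {e0 : E} {γ ρ : ℚ} {fs : E ⊕ Unit → ℚ}

theorem outflow_addSrc_inl (v : V) :
    outflow (addSrc N e0 γ ρ) fs (Sum.inl v) = outflow N (fun e => fs (Sum.inl e)) v := by
  simp [outflow, addSrc, Fintype.sum_sum_type]

theorem inflow_addSrc_inl (v : V) :
    inflow (addSrc N e0 γ ρ) fs (Sum.inl v) =
      inflow N (fun e => fs (Sum.inl e)) v + if N.dst e0 = v then fs (Sum.inr ()) else 0 := by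
  simp [inflow, addSrc, Fintype.sum_sum_type]

theorem Feasible.restrict_addSrc (hfs : Feasible (addSrc N e0 γ ρ) fs)
    (hsv : fs (Sum.inr ()) = 0) : Feasible N (fun e => fs (Sum.inl e)) := by
  refine ⟨fun e => hfs.1 (Sum.inl e), fun v hv => ?_⟩
  have hv' : (Sum.inl v : V ⊕ Unit) ∉ (addSrc N e0 γ ρ).S := by
    simpa [addSrc] using hv
  simpa [outflow_addSrc_inl, inflow_addSrc_inl, hsv] using hfs.2 _ hv'

omit [Fintype E] [DecidableEq V] in
theorem IsBlockingWalk.map_inl_addSrc {l : List E}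
    (hl : IsBlockingWalk N (fun e => fs (Sum.inl e)) l) :
    IsBlockingWalk (addSrc N e0 γ ρ) fs (l.map Sum.inl) := by
  obtain ⟨⟨hne, hchain⟩, hunsat, _, hstart, hend⟩ := hl
  have hne' : l.map (Sum.inl : E → E ⊕ Unit) ≠ [] := by simpa using hne
  refine ⟨⟨hne', ?_⟩, ?_, hne', ?_, ?_⟩
  · exact List.isChain_map _ |>.mpr (hchain.imp fun a b h => by simp [addSrc, h])
  · simpa [addSrc] using hunsat
  · rw [List.head_map]
    rcases hstart with hS | ⟨e', hsrc, hpos, hrk⟩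
    · exact Or.inl (Or.inl ⟨_, hS, rfl⟩)
    · exact Or.inr ⟨Sum.inl e', by simp [addSrc, hsrc], hpos, hrk⟩
  · rw [List.getLast_map]
    rcases hend with hS | ⟨e', hdst, hpos, hrk⟩
    · exact Or.inl (Or.inl ⟨_, hS, rfl⟩)
    · exact Or.inr ⟨Sum.inl e', by simp [addSrc, hdst], hpos, hrk⟩

theorem IsStableFlow.restrict_addSrc (hfs : IsStableFlow (addSrc N e0 γ ρ) fs)
    (hsv : fs (Sum.inr ()) = 0) : IsStableFlow N (fun e => fs (Sum.inl e)) :=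
  ⟨hfs.1.restrict_addSrc hsv, fun _ hl => hfs.2 _ hl.map_inl_addSrc⟩

end addSrc

theorem forbidden_edge_backward_general {V E : Type}
    [Fintype E] [DecidableEq V]
    (N : FlowNet V E) (e0 : E) (γ : ℚ) (hγ : 0 < γ)
    (ρ : ℚ) (hρ1 : ρ < N.rk (N.dst e0) e0)
    (fs : (E ⊕ Unit) → ℚ) (hfs : IsStableFlow (addSrc N e0 γ ρ) fs)
    (hsv : fs (Sum.inr ()) = 0) :
    fs (Sum.inl e0) = 0 ∧ IsStableFlow N (fun e => fs (Sum.inl e)) := by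
  have hunsat : fs (Sum.inr ()) < (addSrc N e0 γ ρ).cap (Sum.inr ()) := by
    simpa [addSrc, hsv] using hγ
  have huv : fs (Sum.inl e0) = 0 :=
    hfs.eq_zero_of_terminal_unsaturated (Or.inr (Set.mem_singleton _)) hunsat rfl hρ1
  exact ⟨huv, hfs.restrict_addSrc hsv⟩

/-- Backward direction of the single-forbidden-edge lemma: if `f_s` is a
stable flow on `D_s` with `f_s(sv) = 0`, then `f_s(uv) = 0` and the
restriction of `f_s` to `D` is a stable flow on `D` avoiding `uv`. -/
theorem forbidden_edge_backward {V E : Type}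
    [Fintype E] [DecidableEq V]
    (N : FlowNet V E) (e0 : E) (γ : ℚ) (hγ : 0 < γ)
    (ρ : ℚ) (hρ1 : ρ < N.rk (N.dst e0) e0)
    (hρ2 : ∀ e, N.rk (N.dst e0) e < N.rk (N.dst e0) e0 →
      N.rk (N.dst e0) e < ρ)
    (fs : (E ⊕ Unit) → ℚ) (hfs : IsStableFlow (addSrc N e0 γ ρ) fs)
    (hsv : fs (Sum.inr ()) = 0) :
    fs (Sum.inl e0) = 0 ∧ IsStableFlow N (fun e => fs (Sum.inl e)) :=
  forbidden_edge_backward_general N e0 γ hγ ρ hρ1 fs hfs hsv
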